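/- The structure (N_t, r_t, parent_t) extracted from a tree-like multiset t — where N_t is the support of flat_F(t), r_t is the root of t, and parent_t maps each non-root element to its parent — is a tree: parent_t is a function on N_t \ {r_t} into N_t, and every element reaches the root by finitely many applications of parent_t. -/

import Mathlib

namespace CFDPaper

noncomputable section

attribute [local instance] Classical.decEq
attribute [local instance] Classical.propDecidable

/-- Depth-indexed hereditary finite multisets: `HMd A n` models the class `M_{n+1}(A)`
of the cumulative hierarchy of finite multisets over the urelements `A`. -/
@[reducible] def HMd (A : Type) : ℕ → Type
  | 0 => Multiset A
  | n + 1 => Multiset (A ⊕ HMd A n)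

variable {A B F : Type}

instance instAddHMd (A : Type) (n : ℕ) : Add (HMd A n) :=
  match n with
  | 0 => inferInstanceAs (Add (Multiset A))
  | n + 1 => inferInstanceAs (Add (Multiset (A ⊕ HMd A n)))

/-- The canonical inclusion `M_{n+1}(A) ⊆ M_{n+2}(A)`. -/
def HMd.up : ∀ n : ℕ, HMd A n → HMd A (n + 1)
  | 0, m => ((m : Multiset A).map (Sum.inl : A → A ⊕ HMd A 0) : Multiset (A ⊕ HMd A 0))
  | n + 1, m => ((m : Multiset (A ⊕ HMd A n)).map (Sum.map id (HMd.up n)) :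
      Multiset (A ⊕ HMd A (n + 1)))

/-- Iterated inclusion along `k ≤ n`. -/
def HMd.liftLe {k n : ℕ} (h : k ≤ n) (m : HMd A k) : HMd A n :=
  Nat.leRecOn h (fun {i} x => HMd.up i x) m

/-- `m` (living at some level of the hierarchy) already appears at level `r`. -/
def comesFrom (r : ℕ) (m : Σ n, HMd A n) : Prop :=
  ∃ (h : r ≤ m.1) (x : HMd A r), HMd.liftLe h x = m.2

/-- The rank of a hereditary multiset: least level of the hierarchy where it occurs
(`rank m = r` corresponds to paper-rank `r + 1`). -/
def rank (m : Σ n, HMd A n) : ℕ := sInf {r | comesFrom r m}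

/-- Equality of hereditary multisets living at different levels, via lifting. -/
def hmEq {k n : ℕ} (x : HMd A k) (y : HMd A n) : Prop :=
  HMd.liftLe (le_max_left k n) x = HMd.liftLe (le_max_right k n) y

/-- Membership of a multiset in the domain (support) of a higher-level multiset. -/
def HMd.Memb {n : ℕ} (x : HMd A n) (m : HMd A (n + 1)) : Prop :=
  Sum.inr x ∈ (m : Multiset (A ⊕ HMd A n))

/-- The flattening function: flat multiplicity of each urelement. -/
def HMd.flat : ∀ {n : ℕ}, HMd A n → Multiset A
  | 0, m => (m : Multiset A)
  | n + 1, m => (m : Multiset (A ⊕ HMd A n)).bind fun e =>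
      match e with
      | Sum.inl a => {a}
      | Sum.inr x => HMd.flat (n := n) x

/-- Top-level multiplicity of an urelement. -/
def HMd.acount : ∀ {n : ℕ}, F → HMd F n → ℕ
  | 0, f, m => (m : Multiset F).count f
  | _ + 1, f, m => (m : Multiset _).count (Sum.inl f)

/-- The multiset-ingredient relation (transitive closure of domain membership). -/
inductive Ingr (A : Type) : ∀ {k n : ℕ}, HMd A k → HMd A n → Prop
  | mem {n : ℕ} {x : HMd A n} {m : HMd A (n + 1)} : x.Memb m → Ingr A x m
  | tail {k n : ℕ} {x : HMd A k} {y : HMd A n} {m : HMd A (n + 1)} :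
      Ingr A x y → y.Memb m → Ingr A x m

/-- Disjointness of flattened domains. -/
def FDisj {k n : ℕ} (x : HMd A k) (y : HMd A n) : Prop :=
  ∀ a, a ∈ x.flat → a ∉ y.flat

/-- The singleton multiset `⌈f⌉` at each level. -/
def HMd.single : ∀ n : ℕ, A → HMd A n
  | 0, f => ({f} : Multiset A)
  | _ + 1, f => ({Sum.inl f} : Multiset _)

/-- `⌈xᶜ⌉` : the multiset containing `x` with multiplicity `c`. -/
def HMd.rep {n : ℕ} (c : ℕ) (x : HMd A n) : HMd A (n + 1) :=
  (Multiset.replicate c (Sum.inr x) : Multiset (A ⊕ HMd A n))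

/-- `⌈t₁^{n₁}, …, t_k^{n_k}⌉` built from a list of tree-multiplicity pairs. -/
def HMd.ofList {n : ℕ} (l : List (HMd A n × ℕ)) : HMd A (n + 1) :=
  ((l.map fun p => Multiset.replicate p.2 (Sum.inr p.1 : A ⊕ HMd A n)).sum :
    Multiset (A ⊕ HMd A n))

/-- A "group" multiset: one whose domain contains no urelements. -/
def HMd.NoAtoms {n : ℕ} (g : HMd A (n + 1)) : Prop :=
  ∀ a : A, Sum.inl a ∉ (g : Multiset (A ⊕ HMd A n))

/-- Tree-like multisets over `F` (Definition: singleton, solitary-extension,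
group-extension; closed under the cumulative inclusions). -/
inductive TreeLike (F : Type) : ∀ n : ℕ, HMd F n → Prop
  | sing (n : ℕ) (f : F) : TreeLike F n (HMd.single n f)
  | up {n : ℕ} {t : HMd F n} : TreeLike F n t → TreeLike F (n + 1) (HMd.up n t)
  | sol {n : ℕ} {t₁ : HMd F (n + 1)} {t₂ : HMd F n} (c : ℕ) :
      TreeLike F (n + 1) t₁ → TreeLike F n t₂ → FDisj t₁ t₂ →
      TreeLike F (n + 1) (t₁ + HMd.rep c t₂)
  | grp {n : ℕ} {t : HMd F (n + 1)} (l : List (HMd F n × ℕ)) :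
      TreeLike F (n + 1) t →
      (∀ p ∈ l, TreeLike F n p.1) →
      (∀ p ∈ l, FDisj t p.1) →
      l.Pairwise (fun p q => FDisj p.1 q.1) →
      TreeLike F (n + 2) (HMd.up (n + 1) t + HMd.rep 1 (HMd.ofList l))

/-- `x` is an ingredient of `t`, or `t` itself. -/
def IngrE {k n : ℕ} (x : HMd A k) (t : HMd A n) : Prop :=
  Ingr A x t ∨ hmEq x t

/-- `x` occurs (up to lifting) in the domain of `m`. -/
def MemUpTo {k n : ℕ} (x : HMd A k) (m : HMd A (n + 1)) : Prop :=
  ∃ y : HMd A n, HMd.Memb y m ∧ hmEq x y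

/-- `x` is the tree-like ingredient of `t` induced by (i.e. with root) `f`. -/
def RootedIngr {n : ℕ} (t : HMd F n) (f : F) {k : ℕ} (x : HMd F k) : Prop :=
  IngrE x t ∧ TreeLike F k x ∧ 0 < HMd.acount f x

/-- `p` is the parent of `f` in the tree-like multiset `t`: the induced multiset of `f`
lies in the domain of the multiset induced by `p`, directly or inside a group ingredient. -/
def IsParentIn {n : ℕ} (t : HMd F n) (f p : F) : Prop :=
  ∃ (kp : ℕ) (xp : HMd F (kp + 1)), RootedIngr t p xp ∧
    ∃ (kf : ℕ) (xf : HMd F kf), RootedIngr t f xf ∧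
      (MemUpTo xf xp ∨
        ∃ (kg : ℕ) (g : HMd F (kg + 1)), MemUpTo g xp ∧ HMd.NoAtoms g ∧ MemUpTo xf g)

/-- `f` occurs grouped in `t`: some group ingredient of `t` has a member with root `f`. -/
def InGroupOf {n : ℕ} (t : HMd F n) (f : F) : Prop :=
  ∃ (kg : ℕ) (g : HMd F (kg + 1)), Ingr F g t ∧ HMd.NoAtoms g ∧
    ∃ x : HMd F kg, HMd.Memb x g ∧ TreeLike F kg x ∧ 0 < HMd.acount f x

/-- Relaxation: set every multiplicity, at every nesting level, to 1. -/
def HMd.relax : ∀ {n : ℕ}, HMd A n → HMd A n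
  | 0, m => ((m : Multiset A).dedup : Multiset A)
  | n + 1, m =>
      (((m : Multiset (A ⊕ HMd A n)).map (Sum.map id (HMd.relax (n := n)))).dedup :
        Multiset (A ⊕ HMd A n))

/-- Renaming of urelements. -/
def HMd.mapA (g : A → B) : ∀ {n : ℕ}, HMd A n → HMd B n
  | 0, m => ((m : Multiset A).map g : Multiset B)
  | n + 1, m => ((m : Multiset (A ⊕ HMd A n)).map (Sum.map g (HMd.mapA g (n := n))) :
      Multiset (B ⊕ HMd B n))

/-- Cardinality-based feature diagrams over the feature universe `F`. -/
structure CFD (F : Type) where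
  feat : Finset F
  root : F
  root_mem : root ∈ feat
  parent : F → F
  parent_mem : ∀ f ∈ feat, f ≠ root → parent f ∈ feat
  reaches : ∀ f ∈ feat,
    Relation.ReflTransGen (fun a b => a ∈ feat ∧ a ≠ root ∧ parent a = b) f root
  groups : Finset (Finset F)
  groups_sub : ∀ G ∈ groups, ∀ f ∈ G, f ∈ feat ∧ f ≠ root
  groups_card : ∀ G ∈ groups, 1 < G.card
  groups_sib : ∀ G ∈ groups, ∀ f ∈ G, ∀ g ∈ G, parent f = parent g
  groups_disj : ∀ G ∈ groups, ∀ G' ∈ groups, G = G' ∨ Disjoint G G'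
  card : F → Set ℕ
  gcard : Finset F → Set ℕ
  card_ok : ∀ f ∈ feat, f ≠ root → (card f).Nonempty ∧ card f ≠ {0}
  gcard_ok : ∀ G ∈ groups,
    (gcard G).Finite ∧ (gcard G).Nonempty ∧ gcard G ≠ {0} ∧ ∀ c ∈ gcard G, c ≤ G.card
  parent_junk : ∀ f, ¬(f ∈ feat ∧ f ≠ root) → parent f = root
  card_junk : ∀ f, ¬(f ∈ feat ∧ f ≠ root) → card f = ∅
  gcard_junk : ∀ G, G ∉ groups → gcard G = ∅

variable {F : Type}

/-- The solitary (non-grouped) children of `f` in `D`. -/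
def solChildren (D : CFD F) (f : F) : Finset F :=
  D.feat.filter fun s => s ≠ D.root ∧ D.parent s = f ∧ ∀ G ∈ D.groups, s ∉ G

/-- The groups whose members are children of `f` in `D`. -/
def childGroups (D : CFD F) (f : F) : Finset (Finset F) :=
  D.groups.filter fun G => ∃ s ∈ G, D.parent s = f

/-- The hereditary multiset assembled from a choice of sub-products. -/
def prodMS (D : CFD F) (f : F) {n : ℕ} (hs : F → HMd F n) (hc : F → ℕ)
    (hg : Finset F → HMd F n) : HMd F (n + 1) :=
  ((({Sum.inl f} : Multiset (F ⊕ HMd F n))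
    + ((solChildren D f).val.map fun s =>
        Multiset.replicate (hc s) (Sum.inr (hs s) : F ⊕ HMd F n)).sum
    + ((childGroups D f).val.map fun G => (Sum.inr (hg G) : F ⊕ HMd F n)))
    : Multiset (F ⊕ HMd F n))

/-- The hereditary multiset assembled from a group selection. -/
def grpMS {n : ℕ} (sel : Finset F) (hs : F → HMd F n) (hc : F → ℕ) : HMd F (n + 1) :=
  ((sel.val.map fun s =>
      Multiset.replicate (hc s) (Sum.inr (hs s) : F ⊕ HMd F n)).sum :
    Multiset (F ⊕ HMd F n))

mutual
  /-- `HierProd D f m` : `m` is a hierarchical product of the subdiagram of `D` induced by `f`. -/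
  inductive HierProd {F : Type} (D : CFD F) : F → ∀ {n : ℕ}, HMd F n → Prop
    | mk {n : ℕ} (f : F) (hs : F → HMd F n) (hc : F → ℕ) (hg : Finset F → HMd F n)
        (hf : f ∈ D.feat)
        (hsol : ∀ s ∈ solChildren D f, HierProd D s (hs s))
        (hsolc : ∀ s ∈ solChildren D f, hc s ∈ D.card s)
        (hgrp : ∀ G ∈ childGroups D f, GroupProd D G (hg G)) :
        HierProd D f (prodMS D f hs hc hg)
  /-- `GroupProd D G m` : `m` is a hierarchical product associated with the group `G` of `D`. -/
  inductive GroupProd {F : Type} (D : CFD F) : Finset F → ∀ {n : ℕ}, HMd F n → Prop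
    | mk {n : ℕ} (G sel : Finset F) (hs : F → HMd F n) (hc : F → ℕ)
        (hsub : sel ⊆ G) (hG : G ∈ D.groups) (hcard : sel.card ∈ D.gcard G)
        (hmem : ∀ s ∈ sel, HierProd D s (hs s))
        (hmemc : ∀ s ∈ sel, hc s ∈ D.card s) :
        GroupProd D G (grpMS sel hs hc)
end

/-- The hierarchical theory of `D` (as a set of hereditary multisets at all levels). -/
def ProductsSet (D : CFD F) : Set (Σ n, HMd F n) := {m | HierProd D D.root m.2}

/-- A set of (tree-like) multisets is mergeable if a single CFD represents all of them. -/
def Mergeable (U : Set (Σ n, HMd F n)) : Prop :=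
  ∃ D : CFD F, ∀ m ∈ U, HierProd D D.root m.2

/-- A set is completely mergeable if it is exactly the hierarchical theory of some CFD. -/
def CompletelyMergeable (U : Set (Σ n, HMd F n)) : Prop :=
  ∃ D : CFD F, U = ProductsSet D

/-- Pointwise relaxation of a set of hereditary multisets. -/
def relaxSet (U : Set (Σ n, HMd F n)) : Set (Σ n, HMd F n) :=
  {x | ∃ m ∈ U, x = ⟨m.1, HMd.relax m.2⟩}

/-- The flat products of `D` (Definition of flat theory). -/
def FlatProd (D : CFD F) (m : Multiset F) : Prop :=
  (∀ f ∈ m, f ∈ D.feat) ∧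
  m.count D.root = 1 ∧
  (∀ f ∈ D.feat, f ≠ D.root → 0 < m.count f →
    ∃ c ∈ D.card f, m.count f = c * m.count (D.parent f)) ∧
  (∀ f ∈ D.feat, f ≠ D.root → (∀ G ∈ D.groups, f ∉ G) → 0 ∉ D.card f →
    0 < m.count (D.parent f) → 0 < m.count f) ∧
  (∀ G ∈ D.groups, ∀ g ∈ G, 0 < m.count (D.parent g) →
    (G.filter fun f => 0 < m.count f).card ∈ D.gcard G)

/-- Rooted (possibly countably infinite) trees with explicit parent function. -/
structure RTree (N : Type) where
  nodes : Set N
  countable : nodes.Countable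
  root : N
  root_mem : root ∈ nodes
  parent : N → N
  parent_mem : ∀ f ∈ nodes, f ≠ root → parent f ∈ nodes
  reaches : ∀ f ∈ nodes,
    Relation.ReflTransGen (fun a b => a ∈ nodes ∧ a ≠ root ∧ parent a = b) f root


/-!
Induction on `TreeLike`, carrying the invariant `RootedTree`. Uniqueness of parents is proved for
`WeakParentIn`, which forgets tree-likeness: a weak parent edge of a composite multiset is one of
a part, or the new edge from the root of an attached tree (or group member) to the old root, and
disjointness of the flattened domains tells from the child alone which case occurs. Parent chains
of the parts carry over to the composite (`IsParentIn.mono`), and the new edges join them to the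
root.
-/

namespace HMd

theorem up_injective : ∀ n : ℕ, Function.Injective (HMd.up (A := A) n)
  | 0 => Multiset.map_injective Sum.inl_injective
  | n + 1 => Multiset.map_injective (Function.injective_id.sumMap (up_injective n))

theorem liftLe_self {k : ℕ} (h : k ≤ k) (x : HMd A k) : liftLe h x = x :=
  Nat.leRecOn_self x

theorem liftLe_succ {k n : ℕ} (h : k ≤ n) (h' : k ≤ n + 1) (x : HMd A k) :
    liftLe h' x = up n (liftLe h x) :=
  Nat.leRecOn_succ h x

theorem liftLe_liftLe {a b c : ℕ} (h₁ : a ≤ b) (h₂ : b ≤ c) (x : HMd A a) :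
    liftLe h₂ (liftLe h₁ x) = liftLe (h₁.trans h₂) x :=
  (Nat.leRecOn_trans h₁ h₂ x).symm

theorem liftLe_injective {k n : ℕ} (h : k ≤ n) : Function.Injective (liftLe (A := A) h) := by
  induction n, h using Nat.le_induction with
  | base => intro x y e; rwa [liftLe_self, liftLe_self] at e
  | succ n h ih =>
    intro x y e
    rw [liftLe_succ h, liftLe_succ h] at e
    exact ih (up_injective n e)

theorem liftLe_invariant {β : Sort*} (Φ : ∀ {n : ℕ}, HMd A n → β)
    (hΦ : ∀ n (x : HMd A n), Φ (up n x) = Φ x) {k n : ℕ} (h : k ≤ n) (x : HMd A k) :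
    Φ (liftLe h x) = Φ x := by
  induction n, h using Nat.le_induction with
  | base => rw [liftLe_self]
  | succ n h ih => rw [liftLe_succ h, hΦ, ih]

theorem flat_up : ∀ (n : ℕ) (x : HMd A n), (up n x).flat = x.flat
  | 0, x => by
    change (x.map Sum.inl).bind _ = x
    rw [Multiset.bind_map]
    exact (Multiset.bind_singleton (s := x) id).trans (Multiset.map_id x)
  | n + 1, x => by
    change (x.map (Sum.map id (up n))).bind _ = x.bind _
    rw [Multiset.bind_map]
    refine Multiset.bind_congr fun e _ => ?_
    rcases e with a | y
    · rfl
    · exact flat_up n y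

theorem acount_up (f : F) : ∀ (n : ℕ) (x : HMd F n), acount f (up n x) = acount f x
  | 0, x => by
    simp only [acount, up]
    convert Multiset.count_map_eq_count' _ x Sum.inl_injective f using 2
  | n + 1, x => by
    simp only [acount, up]
    convert Multiset.count_map_eq_count' (Sum.map id (up n)) x
      (Function.injective_id.sumMap (up_injective n)) (Sum.inl f) using 2
    rfl

end HMd

open HMd

theorem hmEq_iff_exists {k n : ℕ} {x : HMd A k} {y : HMd A n} :
    hmEq x y ↔ ∃ (N : ℕ) (h₁ : k ≤ N) (h₂ : n ≤ N), liftLe h₁ x = liftLe h₂ y := by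
  refine ⟨fun h => ⟨_, _, _, h⟩, fun ⟨N, h₁, h₂, e⟩ => ?_⟩
  have e' := congrArg (liftLe (le_max_right (max k n) N)) e
  rw [liftLe_liftLe, liftLe_liftLe] at e'
  refine liftLe_injective (le_max_left (max k n) N) ?_
  rwa [liftLe_liftLe, liftLe_liftLe]

theorem hmEq.refl {k : ℕ} (x : HMd A k) : hmEq x x := rfl

theorem hmEq.symm {k n : ℕ} {x : HMd A k} {y : HMd A n} (h : hmEq x y) : hmEq y x := by
  obtain ⟨N, h₁, h₂, e⟩ := hmEq_iff_exists.mp h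
  exact hmEq_iff_exists.mpr ⟨N, h₂, h₁, e.symm⟩

theorem hmEq.trans {k n m : ℕ} {x : HMd A k} {y : HMd A n} {z : HMd A m}
    (h₁ : hmEq x y) (h₂ : hmEq y z) : hmEq x z := by
  obtain ⟨N₁, a₁, b₁, e₁⟩ := hmEq_iff_exists.mp h₁
  obtain ⟨N₂, a₂, b₂, e₂⟩ := hmEq_iff_exists.mp h₂
  refine hmEq_iff_exists.mpr
    ⟨max N₁ N₂, a₁.trans (le_max_left _ _), b₂.trans (le_max_right _ _), ?_⟩
  have e₁' := congrArg (liftLe (le_max_left N₁ N₂)) e₁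
  have e₂' := congrArg (liftLe (le_max_right N₁ N₂)) e₂
  rw [liftLe_liftLe, liftLe_liftLe] at e₁' e₂'
  exact e₁'.trans e₂'

theorem hmEq_up {k : ℕ} (x : HMd A k) : hmEq (up k x) x :=
  hmEq_iff_exists.mpr
    ⟨k + 1, le_rfl, k.le_succ, by rw [liftLe_self, liftLe_succ le_rfl, liftLe_self]⟩

theorem hmEq.congr_fun {β : Sort*} (Φ : ∀ {n : ℕ}, HMd A n → β)
    (hΦ : ∀ n (x : HMd A n), Φ (up n x) = Φ x) {k n : ℕ} {x : HMd A k} {y : HMd A n}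
    (h : hmEq x y) : Φ x = Φ y := by
  rw [← liftLe_invariant Φ hΦ (le_max_left k n) x,
    ← liftLe_invariant Φ hΦ (le_max_right k n) y]
  exact congrArg Φ h

theorem hmEq.acount_eq {k n : ℕ} {x : HMd F k} {y : HMd F n} (h : hmEq x y) (f : F) :
    acount f x = acount f y :=
  h.congr_fun (acount f) (acount_up f)

theorem hmEq.flat_eq {k n : ℕ} {x : HMd A k} {y : HMd A n} (h : hmEq x y) : x.flat = y.flat :=
  h.congr_fun flat flat_up

def MemDom {k : ℕ} (x : HMd A k) : ∀ {n : ℕ}, HMd A n → Prop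
  | 0, _ => False
  | _ + 1, m => MemUpTo x m

section Membership

variable {k n : ℕ}

theorem not_memb_up_zero (m z : HMd A 0) : ¬ z.Memb (up 0 m) := by
  simp only [Memb, up, Multiset.mem_map, reduceCtorEq, and_false, exists_false, not_false_eq_true]

theorem memb_up_succ {m z : HMd A (n + 1)} :
    z.Memb (up (n + 1) m) ↔ ∃ w, w.Memb m ∧ z = up n w := by
  simp only [Memb, up, Multiset.mem_map]
  constructor
  · rintro ⟨a | w, hw, he⟩
    · cases he
    · exact ⟨w, hw, (Sum.inr.inj he).symm⟩
  · rintro ⟨w, hw, rfl⟩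
    exact ⟨Sum.inr w, hw, rfl⟩

theorem memb_add {y : HMd A n} {a b : HMd A (n + 1)} : y.Memb (a + b) ↔ y.Memb a ∨ y.Memb b :=
  Multiset.mem_add

theorem memb_rep {y z : HMd A n} {c : ℕ} : y.Memb (rep c z) ↔ 0 < c ∧ y = z := by
  simp only [Memb, rep, Multiset.mem_replicate, Sum.inr.injEq, Nat.pos_iff_ne_zero]

theorem ofList_cons (q : HMd A n × ℕ) (l : List (HMd A n × ℕ)) :
    ofList (q :: l) = rep q.2 q.1 + ofList l := by
  simp [ofList, rep]

theorem memb_ofList {y : HMd A n} {l : List (HMd A n × ℕ)} :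
    y.Memb (ofList l) ↔ ∃ q ∈ l, 0 < q.2 ∧ y = q.1 := by
  induction l with
  | nil => simp [ofList, Memb]
  | cons q l ih =>
    rw [ofList_cons, memb_add, memb_rep, ih]
    simp

theorem not_memb_single {y : HMd A n} (f : A) : ¬ y.Memb (single (n + 1) f) := by
  simp [Memb, single]

theorem memDom_up (x : HMd A k) (m : HMd A n) : MemDom x (up n m) ↔ MemDom x m := by
  cases n with
  | zero => exact iff_of_false (fun ⟨y, hy, _⟩ => not_memb_up_zero m y hy) id
  | succ n =>
    refine ⟨fun ⟨y, hy, he⟩ => ?_, fun ⟨y, hy, he⟩ =>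
      ⟨up n y, memb_up_succ.mpr ⟨y, hy, rfl⟩, he.trans (hmEq_up y).symm⟩⟩
    obtain ⟨w, hw, rfl⟩ := memb_up_succ.mp hy
    exact ⟨w, hw, he.trans (hmEq_up w)⟩

theorem hmEq.memDom_iff_right {a : ℕ} {x : HMd A k} {m : HMd A n} {m' : HMd A a}
    (h : hmEq m m') : MemDom x m ↔ MemDom x m' :=
  Iff.of_eq (h.congr_fun (fun m => MemDom x m) fun _ m => propext (memDom_up x m))

theorem hmEq.memDom_iff_left {a : ℕ} {x : HMd A k} {x' : HMd A a} (h : hmEq x x') (m : HMd A n) :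
    MemDom x m ↔ MemDom x' m := by
  cases n with
  | zero => exact Iff.rfl
  | succ n => exact exists_congr fun y => and_congr_right fun _ => ⟨h.symm.trans, h.trans⟩

theorem memDom_add {x : HMd A k} {a b : HMd A (n + 1)} :
    MemDom x (a + b) ↔ MemDom x a ∨ MemDom x b := by
  change (∃ y, _ ∧ _) ↔ (∃ y, _ ∧ _) ∨ (∃ y, _ ∧ _)
  simp only [← exists_or, ← or_and_right, ← memb_add]

theorem memDom_rep {x : HMd A k} {z : HMd A n} {c : ℕ} :
    MemDom x (rep c z) ↔ 0 < c ∧ hmEq x z := by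
  change (∃ y, _ ∧ _) ↔ _
  simp only [memb_rep, and_assoc, exists_and_left, exists_eq_left]

theorem memDom_ofList {x : HMd A k} {l : List (HMd A n × ℕ)} :
    MemDom x (ofList l) ↔ ∃ q ∈ l, 0 < q.2 ∧ hmEq x q.1 := by
  simp only [MemDom, MemUpTo, memb_ofList]
  constructor
  · rintro ⟨_, ⟨q, hq, hc, rfl⟩, he⟩
    exact ⟨q, hq, hc, he⟩
  · rintro ⟨q, hq, hc, he⟩
    exact ⟨_, ⟨q, hq, hc, rfl⟩, he⟩

theorem not_memDom_single (x : HMd A k) (f : A) : ¬ MemDom x (single n f) := by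
  cases n with
  | zero => exact id
  | succ n => exact fun ⟨_, hy, _⟩ => not_memb_single f hy

end Membership

section Flat

variable {k n : ℕ}

theorem mem_flat_succ {a : A} {m : HMd A (n + 1)} :
    a ∈ m.flat ↔
      Sum.inl a ∈ (m : Multiset (A ⊕ HMd A n)) ∨ ∃ z : HMd A n, z.Memb m ∧ a ∈ z.flat := by
  change a ∈ Multiset.bind _ _ ↔ _
  rw [Multiset.mem_bind]
  constructor
  · rintro ⟨b | z, hm, ha⟩
    · rw [Multiset.mem_singleton.mp ha]
      exact Or.inl hm
    · exact Or.inr ⟨z, hm, ha⟩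
  · rintro (hm | ⟨z, hm, ha⟩)
    · exact ⟨Sum.inl a, hm, Multiset.mem_singleton_self a⟩
    · exact ⟨Sum.inr z, hm, ha⟩

theorem mem_flat_of_memb {a : A} {z : HMd A n} {m : HMd A (n + 1)} (h : z.Memb m)
    (ha : a ∈ z.flat) :
    a ∈ m.flat :=
  mem_flat_succ.mpr (Or.inr ⟨z, h, ha⟩)

theorem flat_add (a b : HMd A (n + 1)) : (a + b).flat = a.flat + b.flat :=
  Multiset.add_bind _ _ _

theorem mem_flat_rep {a : A} {c : ℕ} {z : HMd A n} :
    a ∈ (rep c z).flat ↔ 0 < c ∧ a ∈ z.flat := by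
  rw [mem_flat_succ]
  constructor
  · rintro (h | ⟨y, hy, ha⟩)
    · cases (Multiset.eq_of_mem_replicate h)
    · obtain ⟨hc, rfl⟩ := memb_rep.mp hy
      exact ⟨hc, ha⟩
  · rintro ⟨hc, ha⟩
    exact Or.inr ⟨z, memb_rep.mpr ⟨hc, rfl⟩, ha⟩

theorem mem_flat_ofList {a : A} {l : List (HMd A n × ℕ)} :
    a ∈ (ofList l).flat ↔ ∃ q ∈ l, 0 < q.2 ∧ a ∈ q.1.flat := by
  induction l with
  | nil => simp [ofList, mem_flat_succ, Memb]
  | cons q l ih =>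
    rw [ofList_cons, flat_add, Multiset.mem_add, mem_flat_rep, ih]
    simp

theorem flat_single (f : A) : (single n f).flat = {f} := by
  cases n with
  | zero => rfl
  | succ n => simp [single, flat, Multiset.singleton_bind]

theorem mem_flat_of_acount_pos {f : F} {x : HMd F n} (h : 0 < acount f x) : f ∈ x.flat := by
  cases n with
  | zero => exact Multiset.count_pos.mp h
  | succ n => exact mem_flat_succ.mpr (Or.inl (Multiset.count_pos.mp h))

theorem MemDom.mem_flat {a : A} {x : HMd A k} {m : HMd A n} (h : MemDom x m) (ha : a ∈ x.flat) :
    a ∈ m.flat := by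
  cases n with
  | zero => exact h.elim
  | succ n =>
    obtain ⟨y, hy, he⟩ := h
    exact mem_flat_of_memb hy (he.flat_eq ▸ ha)

theorem acount_add (f : F) (a b : HMd F (n + 1)) : acount f (a + b) = acount f a + acount f b :=
  Multiset.count_add _ _ _

theorem acount_rep (f : F) (c : ℕ) (z : HMd F n) : acount f (rep c z) = 0 := by
  simp [acount, rep, Multiset.count_replicate]

theorem acount_ofList (f : F) (l : List (HMd F n × ℕ)) : acount f (ofList l) = 0 := by
  induction l with
  | nil => rfl
  | cons q l ih => rw [ofList_cons, acount_add, acount_rep, ih]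

theorem acount_single_pos_iff {f a : F} : 0 < acount a (single n f) ↔ a = f := by
  cases n <;> simp [acount, single, Multiset.count_singleton, apply_ite]

end Flat

section Ingredients

variable {k n : ℕ}

theorem not_ingr_zero {x : HMd A k} {m : HMd A 0} : ¬ Ingr A x m := by
  intro h
  generalize hN : (0 : ℕ) = N at *
  induction h with
  | mem _ => omega
  | tail _ _ _ => omega

theorem Ingr.mem_flat {a : A} {x : HMd A k} {m : HMd A n} (h : Ingr A x m) (ha : a ∈ x.flat) :
    a ∈ m.flat := by
  induction h with
  | mem hx => exact mem_flat_of_memb hx ha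
  | tail _ hy ih => exact mem_flat_of_memb hy (ih ha)

theorem Ingr.trans {j : ℕ} {x : HMd A k} {y : HMd A j} {m : HMd A n} (h₁ : Ingr A x y)
    (h₂ : Ingr A y m) : Ingr A x m := by
  induction h₂ with
  | mem hy => exact h₁.tail hy
  | tail _ hz ih => exact (ih h₁).tail hz

theorem Ingr.mono_right {x : HMd A k} {m m' : HMd A (n + 1)}
    (hm : ∀ y : HMd A n, y.Memb m → y.Memb m') (h : Ingr A x m) : Ingr A x m' := by
  cases h with
  | mem hx => exact Ingr.mem (hm _ hx)
  | tail hxy hy => exact hxy.tail (hm _ hy)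

theorem Ingr.up {x : HMd A k} {m : HMd A n} (h : Ingr A x m) :
    Ingr A (HMd.up k x) (HMd.up n m) := by
  have memb_up : ∀ {i} {z : HMd A i} {m : HMd A (i + 1)},
      z.Memb m → (HMd.up i z).Memb (HMd.up (i + 1) m) :=
    fun h => memb_up_succ.mpr ⟨_, h, rfl⟩
  induction h with
  | mem hx => exact Ingr.mem (memb_up hx)
  | tail _ hy ih => exact ih.tail (memb_up hy)

def IsNode {k n : ℕ} (x : HMd A k) (t : HMd A n) : Prop :=
  ∃ (j : ℕ) (y : HMd A j), IngrE y t ∧ hmEq x y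

theorem isNode_self (t : HMd A n) : IsNode t t :=
  ⟨n, t, Or.inr (hmEq.refl t), hmEq.refl t⟩

theorem isNode_of_ingrE {x : HMd A k} {t : HMd A n} (h : IngrE x t) : IsNode x t :=
  ⟨k, x, h, hmEq.refl x⟩

theorem IsNode.of_hmEq {j : ℕ} {x : HMd A k} {y : HMd A j} {t : HMd A n} (h : hmEq x y)
    (hy : IsNode y t) : IsNode x t :=
  let ⟨i, z, hz, hyz⟩ := hy
  ⟨i, z, hz, h.trans hyz⟩

theorem isNode_succ_iff {x : HMd A k} {m : HMd A (n + 1)} :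
    IsNode x m ↔ hmEq x m ∨ ∃ y : HMd A n, y.Memb m ∧ IsNode x y := by
  constructor
  · rintro ⟨j, y, hy | hy, hxy⟩
    · cases hy with
      | mem hm => exact Or.inr ⟨y, hm, (isNode_self y).of_hmEq hxy⟩
      | tail hyz hz => exact Or.inr ⟨_, hz, (isNode_of_ingrE (Or.inl hyz)).of_hmEq hxy⟩
    · exact Or.inl (hxy.trans hy)
  · rintro (h | ⟨y, hy, j, w, hw | hw, hxw⟩)
    · exact (isNode_self m).of_hmEq h
    · exact ⟨j, w, Or.inl (hw.tail hy), hxw⟩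
    · exact ⟨n, y, Or.inl (Ingr.mem hy), hxw.trans hw⟩

theorem isNode_zero_iff {x : HMd A k} {m : HMd A 0} : IsNode x m ↔ hmEq x m := by
  constructor
  · rintro ⟨j, y, hy | hy, hxy⟩
    · exact (not_ingr_zero hy).elim
    · exact hxy.trans hy
  · exact fun h => (isNode_self m).of_hmEq h

theorem isNode_up_iff {x : HMd A k} {t : HMd A n} : IsNode x (up n t) ↔ IsNode x t := by
  induction n with
  | zero =>
    rw [isNode_succ_iff, isNode_zero_iff]
    constructor
    · rintro (h | ⟨y, hy, -⟩)
      · exact h.trans (hmEq_up t)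
      · exact (not_memb_up_zero t y hy).elim
    · exact fun h => Or.inl (h.trans (hmEq_up t).symm)
  | succ n ih =>
    rw [isNode_succ_iff, isNode_succ_iff]
    refine or_congr ⟨fun h => h.trans (hmEq_up t), fun h => h.trans (hmEq_up t).symm⟩
      ⟨?_, ?_⟩
    · rintro ⟨y, hy, hx⟩
      obtain ⟨w, hw, rfl⟩ := memb_up_succ.mp hy
      exact ⟨w, hw, ih.mp hx⟩
    · rintro ⟨w, hw, hx⟩
      exact ⟨up n w, memb_up_succ.mpr ⟨w, hw, rfl⟩, ih.mpr hx⟩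

theorem IsNode.mem_flat {a : A} {x : HMd A k} {t : HMd A n} (h : IsNode x t) (ha : a ∈ x.flat) :
    a ∈ t.flat := by
  obtain ⟨j, y, hy | hy, hxy⟩ := h
  · exact hy.mem_flat (hxy.flat_eq ▸ ha)
  · exact (hxy.trans hy).flat_eq ▸ ha

end Ingredients

def HeadedBy {k : ℕ} (z : HMd F k) (f : F) : Prop :=
  0 < acount f z ∨
    ((∀ a : F, acount a z = 0) ∧ ∃ (i : ℕ) (w : HMd F i), MemDom w z ∧ 0 < acount f w)

/-- Parents are shown unique for this weakening of `IsParentIn`, which, unlike `IsParentIn`,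
can be taken apart along the constructors of `TreeLike`. -/
def WeakParentIn {n : ℕ} (t : HMd F n) (f p : F) : Prop :=
  ∃ (k : ℕ) (x : HMd F k), IsNode x t ∧ 0 < acount p x ∧
    ∃ (j : ℕ) (z : HMd F j), MemDom z x ∧ HeadedBy z f

section WeakParent

variable {k n : ℕ} {f p : F}

theorem HeadedBy.of_hmEq {j : ℕ} {z : HMd F k} {z' : HMd F j} (h : hmEq z z')
    (hz : HeadedBy z f) : HeadedBy z' f := by
  rcases hz with hf | ⟨hz, i, w, hw, hf⟩
  · exact Or.inl (h.acount_eq f ▸ hf)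
  · exact Or.inr ⟨fun a => h.acount_eq a ▸ hz a, i, w, h.memDom_iff_right.mp hw, hf⟩

theorem HeadedBy.acount_pos {a : F} {z : HMd F k} (h : HeadedBy z f) (ha : 0 < acount a z) :
    0 < acount f z :=
  h.resolve_right fun ⟨hz, _⟩ => by rw [hz a] at ha; exact lt_irrefl 0 ha

theorem HeadedBy.mem_flat {z : HMd F k} (h : HeadedBy z f) : f ∈ z.flat := by
  rcases h with hf | ⟨-, i, w, hw, hf⟩
  · exact mem_flat_of_acount_pos hf
  · exact hw.mem_flat (mem_flat_of_acount_pos hf)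

theorem WeakParentIn.mem_flat {t : HMd F n} (h : WeakParentIn t f p) : f ∈ t.flat :=
  let ⟨_, _, hx, _, _, _, hz, hzf⟩ := h
  hx.mem_flat (hz.mem_flat hzf.mem_flat)

theorem IsParentIn.weak {t : HMd F n} (h : IsParentIn t f p) : WeakParentIn t f p := by
  obtain ⟨kp, xp, ⟨hxp, -, hp⟩, kf, xf, ⟨-, -, hf⟩, hmem⟩ := h
  refine ⟨kp + 1, xp, isNode_of_ingrE hxp, hp, ?_⟩
  rcases hmem with hm | ⟨kg, g, hg, hgA, hfg⟩
  · exact ⟨kf, xf, hm, Or.inl hf⟩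
  · exact ⟨kg + 1, g, hg,
      Or.inr ⟨fun a => Multiset.count_eq_zero.mpr (hgA a), kf, xf, hfg, hf⟩⟩

theorem IsParentIn.parent_mem_flat {t : HMd F n} (h : IsParentIn t f p) : p ∈ t.flat :=
  let ⟨_, _, ⟨hxp, _, hp⟩, _⟩ := h
  (isNode_of_ingrE hxp).mem_flat (mem_flat_of_acount_pos hp)

end WeakParent

section Constructors

variable {k n : ℕ} {f p : F}

theorem isNode_single_iff {x : HMd A k} {a : A} :
    IsNode x (single n a) ↔ hmEq x (single n a) := by
  cases n with
  | zero => exact isNode_zero_iff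
  | succ n =>
    rw [isNode_succ_iff]
    exact or_iff_left fun ⟨_, hy, _⟩ => not_memb_single a hy

theorem not_weakParentIn_single (a : F) : ¬ WeakParentIn (single n a) f p :=
  fun ⟨_, _, hx, _, _, z, hz, _⟩ =>
    not_memDom_single z a ((isNode_single_iff.mp hx).memDom_iff_right.mp hz)

theorem weakParentIn_up_iff {t : HMd F n} : WeakParentIn (up n t) f p ↔ WeakParentIn t f p :=
  exists_congr fun _ => exists_congr fun _ => and_congr_left' isNode_up_iff

theorem WeakParentIn.of_sol {c : ℕ} {r₂ : F} {t₁ : HMd F (n + 1)} {t₂ : HMd F n}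
    (h₂ : 0 < acount r₂ t₂) (h : WeakParentIn (t₁ + rep c t₂) f p) :
    WeakParentIn t₁ f p ∨ WeakParentIn t₂ f p ∨
      (0 < acount p t₁ ∧ 0 < acount f t₂) := by
  obtain ⟨k, x, hx, hp, j, z, hz, hzf⟩ := h
  rcases isNode_succ_iff.mp hx with hxT | ⟨y, hy, hxy⟩
  · have hpt : 0 < acount p t₁ := by
      rwa [hxT.acount_eq, acount_add, acount_rep, add_zero] at hp
    rcases memDom_add.mp (hxT.memDom_iff_right.mp hz) with hz₁ | hz₂
    · exact Or.inl ⟨_, t₁, isNode_self t₁, hpt, j, z, hz₁, hzf⟩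
    · exact Or.inr (Or.inr ⟨hpt, (hzf.of_hmEq (memDom_rep.mp hz₂).2).acount_pos h₂⟩)
  · rcases memb_add.mp hy with hy₁ | hy₂
    · exact Or.inl ⟨k, x, isNode_succ_iff.mpr (Or.inr ⟨y, hy₁, hxy⟩), hp, j, z, hz, hzf⟩
    · obtain ⟨-, rfl⟩ := memb_rep.mp hy₂
      exact Or.inr (Or.inl ⟨k, x, hxy, hp, j, z, hz, hzf⟩)

theorem WeakParentIn.of_grp {t : HMd F (n + 1)} {l : List (HMd F n × ℕ)}
    (h : WeakParentIn (up (n + 1) t + rep 1 (ofList l)) f p) :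
    WeakParentIn t f p ∨ (∃ q ∈ l, WeakParentIn q.1 f p) ∨
      (0 < acount p t ∧ ∃ q ∈ l, 0 < q.2 ∧ 0 < acount f q.1) := by
  obtain ⟨k, x, hx, hp, j, z, hz, hzf⟩ := h
  rcases isNode_succ_iff.mp hx with hxT | ⟨y, hy, hxy⟩
  · have hpt : 0 < acount p t := by
      rwa [hxT.acount_eq, acount_add, acount_rep, add_zero, acount_up] at hp
    rcases memDom_add.mp (hxT.memDom_iff_right.mp hz) with hzt | hzG
    · exact Or.inl ⟨_, t, isNode_self t, hpt, j, z, (memDom_up z t).mp hzt, hzf⟩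
    · rcases hzf.of_hmEq (memDom_rep.mp hzG).2 with hfG | ⟨-, i, w, hw, hfw⟩
      · rw [acount_ofList] at hfG
        exact absurd hfG (lt_irrefl 0)
      · obtain ⟨q, hq, hq₂, hwq⟩ := memDom_ofList.mp hw
        exact Or.inr (Or.inr ⟨hpt, q, hq, hq₂, hwq.acount_eq f ▸ hfw⟩)
  · rcases memb_add.mp hy with hyt | hyG
    · refine Or.inl (weakParentIn_up_iff.mp ?_)
      exact ⟨k, x, isNode_succ_iff.mpr (Or.inr ⟨y, hyt, hxy⟩), hp, j, z, hz, hzf⟩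
    · obtain ⟨-, rfl⟩ := memb_rep.mp hyG
      rcases isNode_succ_iff.mp hxy with hxG | ⟨y', hy', hxq⟩
      · rw [hxG.acount_eq, acount_ofList] at hp
        exact absurd hp (lt_irrefl 0)
      · obtain ⟨q, hq, -, rfl⟩ := memb_ofList.mp hy'
        exact Or.inr (Or.inl ⟨q, hq, k, x, hxq, hp, j, z, hz, hzf⟩)

end Constructors

section Monotonicity

variable {n n' : ℕ} {f p : F}

/-- The child's multiset is never `s` itself, since `f` is not a top-level atom of `s`. -/
theorem IsParentIn.mono {s : HMd F n} {T : HMd F n'}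
    (hingr : ∀ (k : ℕ) (x : HMd F k), Ingr F x s → TreeLike F k x →
      ∃ (k' : ℕ) (x' : HMd F k'), IngrE x' T ∧ TreeLike F k' x' ∧ hmEq x x')
    (hself : ∃ (k' : ℕ) (x' : HMd F k'), IngrE x' T ∧ TreeLike F k' x' ∧
      (∀ a, acount a x' = acount a s) ∧ ∀ (j : ℕ) (z : HMd F j), MemDom z s → MemDom z x')
    (h : IsParentIn s f p) (hf : acount f s = 0) : IsParentIn T f p := by
  obtain ⟨kp, xp, ⟨hpI, hpT, hpA⟩, kf, xf, ⟨hfI, hfT, hfA⟩, hmem⟩ := h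
  obtain ⟨kf', xf', hfI', hfT', hff⟩ : ∃ (k' : ℕ) (x' : HMd F k'),
      IngrE x' T ∧ TreeLike F k' x' ∧ hmEq xf x' := by
    rcases hfI with hfI | hfs
    · exact hingr _ _ hfI hfT
    · rw [hfs.acount_eq, hf] at hfA
      exact absurd hfA (lt_irrefl 0)
  obtain ⟨kp', xp', hxp', hsub⟩ : ∃ (k' : ℕ) (x' : HMd F k'), RootedIngr T p x' ∧
      ∀ (j : ℕ) (z : HMd F j), MemDom z xp → MemDom z x' := by
    rcases hpI with hpI | hps
    · obtain ⟨k', x', hI, hT, he⟩ := hingr _ _ hpI hpT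
      exact ⟨k', x', ⟨hI, hT, he.acount_eq p ▸ hpA⟩,
        fun j z hz => he.memDom_iff_right.mp hz⟩
    · obtain ⟨k', x', hI, hT, hA, hM⟩ := hself
      exact ⟨k', x', ⟨hI, hT, (hA p).trans (hps.acount_eq p).symm ▸ hpA⟩,
        fun j z hz => hM j z (hps.memDom_iff_right.mp hz)⟩
  have hxf : ∀ (i : ℕ) (m : HMd F i), MemDom xf m → MemDom xf' m :=
    fun _ m => (hff.memDom_iff_left m).mp
  cases kp' with
  | zero =>
    rcases hmem with hm | ⟨kg, g, hg, -, -⟩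
    · exact (hsub _ _ hm).elim
    · exact (hsub _ _ hg).elim
  | succ kp' =>
    refine ⟨kp', xp', hxp', kf', xf', ⟨hfI', hfT', hff.acount_eq f ▸ hfA⟩, ?_⟩
    rcases hmem with hm | ⟨kg, g, hg, hgA, hfg⟩
    · exact Or.inl (hxf _ _ (hsub _ _ hm))
    · exact Or.inr ⟨kg, g, hsub _ _ hg, hgA, hxf (kg + 1) g hfg⟩

theorem IsParentIn.of_ingr {s : HMd F n} {T : HMd F n'} (hs : Ingr F s T) (hst : TreeLike F n s)
    (h : IsParentIn s f p) (hf : acount f s = 0) : IsParentIn T f p :=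
  h.mono (fun k x hx hxt => ⟨k, x, Or.inl (hx.trans hs), hxt, hmEq.refl x⟩)
    ⟨n, s, Or.inl hs, hst, fun _ => rfl, fun _ _ hz => hz⟩ hf

theorem IsParentIn.of_memb_subset {s T : HMd F (n + 1)} (hT : TreeLike F (n + 1) T)
    (hsub : ∀ y : HMd F n, y.Memb s → y.Memb T) (hacount : ∀ a, acount a T = acount a s)
    (h : IsParentIn s f p) (hf : acount f s = 0) : IsParentIn T f p :=
  h.mono (fun k x hx hxt => ⟨k, x, Or.inl (hx.mono_right hsub), hxt, hmEq.refl x⟩)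
    ⟨n + 1, T, Or.inr (hmEq.refl T), hT, hacount,
      fun _ _ ⟨y, hy, he⟩ => ⟨y, hsub y hy, he⟩⟩ hf

theorem IsParentIn.up {t : HMd F n} (ht : TreeLike F n t) (h : IsParentIn t f p)
    (hf : acount f t = 0) : IsParentIn (up n t) f p :=
  h.mono (fun k x hx hxt => ⟨k + 1, HMd.up k x, Or.inl hx.up, hxt.up, (hmEq_up x).symm⟩)
    ⟨n + 1, HMd.up n t, Or.inr (hmEq.refl _), ht.up, fun a => acount_up a n t,
      fun _ z hz => (memDom_up z t).mpr hz⟩ hf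

end Monotonicity

theorem eq_of_mem_flat_of_pairwise {n : ℕ} {l : List (HMd A n × ℕ)}
    (hl : l.Pairwise fun p q => FDisj p.1 q.1) {q q' : HMd A n × ℕ} (hq : q ∈ l)
    (hq' : q' ∈ l) {a : A} (ha : a ∈ q.1.flat) (ha' : a ∈ q'.1.flat) : q = q' := by
  by_contra hne
  have : Std.Symm fun p q : HMd A n × ℕ => FDisj p.1 q.1 :=
    ⟨fun _ _ h a ha ha' => h a ha' ha⟩
  exact hl.forall hq hq' hne a ha ha'

structure RootedTree {n : ℕ} (t : HMd F n) (r : F) : Prop where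
  acount_pos_iff : ∀ a, 0 < acount a t ↔ a = r
  reaches_root : ∀ f ∈ t.flat, Relation.ReflTransGen (fun a b => IsParentIn t a b) f r
  subsingleton_weakParentIn : ∀ f, {p | WeakParentIn t f p}.Subsingleton
  not_weakParentIn_root : ∀ p, ¬ WeakParentIn t r p

namespace RootedTree

variable {n n' : ℕ} {t : HMd F n} {r f : F}

theorem root_mem_flat (h : RootedTree t r) : r ∈ t.flat :=
  mem_flat_of_acount_pos ((h.acount_pos_iff r).mpr rfl)

theorem acount_eq_zero_of_weakParentIn {p : F} (h : RootedTree t r) (hf : WeakParentIn t f p) :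
    acount f t = 0 := by
  by_contra hne
  exact h.not_weakParentIn_root p ((h.acount_pos_iff f).mp (Nat.pos_of_ne_zero hne) ▸ hf)

theorem reaches_root_of_mono {T : HMd F n'} (h : RootedTree t r)
    (hmono : ∀ a b, IsParentIn t a b → acount a t = 0 → IsParentIn T a b)
    (hf : f ∈ t.flat) :
    Relation.ReflTransGen (fun a b => IsParentIn T a b) f r :=
  Relation.ReflTransGen.mono
    (fun a b hab => hmono a b hab (h.acount_eq_zero_of_weakParentIn hab.weak)) _ _
    (h.reaches_root f hf)

end RootedTree

theorem rootedTree_single (n : ℕ) (a : F) : RootedTree (single n a) a where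
  acount_pos_iff _ := acount_single_pos_iff
  reaches_root f hf := by
    rw [flat_single, Multiset.mem_singleton] at hf
    rw [hf]
  subsingleton_weakParentIn _ _ hp := (not_weakParentIn_single a hp).elim
  not_weakParentIn_root _ := not_weakParentIn_single a

theorem RootedTree.up {n : ℕ} {t : HMd F n} {r : F} (h : RootedTree t r) (ht : TreeLike F n t) :
    RootedTree (HMd.up n t) r where
  acount_pos_iff a := by rw [acount_up]; exact h.acount_pos_iff a
  reaches_root f hf := h.reaches_root_of_mono (fun _ _ hab ha => hab.up ht ha) (flat_up n t ▸ hf)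
  subsingleton_weakParentIn f := by
    simpa only [weakParentIn_up_iff] using h.subsingleton_weakParentIn f
  not_weakParentIn_root p hp := h.not_weakParentIn_root p (weakParentIn_up_iff.mp hp)

section Sol

variable {n c : ℕ} {r₁ r₂ : F} {t₁ : HMd F (n + 1)} {t₂ : HMd F n}

theorem acount_sol (a : F) : acount a (t₁ + rep c t₂) = acount a t₁ := by
  rw [acount_add, acount_rep, add_zero]

theorem RootedTree.reaches_root_sol (h₁ : RootedTree t₁ r₁) (h₂ : RootedTree t₂ r₂)
    (ht₁ : TreeLike F (n + 1) t₁) (ht₂ : TreeLike F n t₂) (hd : FDisj t₁ t₂) {f : F}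
    (hf : f ∈ (t₁ + rep c t₂).flat) :
    Relation.ReflTransGen (fun a b => IsParentIn (t₁ + rep c t₂) a b) f r₁ := by
  have hT : TreeLike F (n + 1) (t₁ + rep c t₂) := .sol c ht₁ ht₂ hd
  rw [flat_add, Multiset.mem_add, mem_flat_rep] at hf
  rcases hf with hf | ⟨hc, hf⟩
  · exact h₁.reaches_root_of_mono (fun _ _ hab ha => hab.of_memb_subset hT
      (fun _ hy => memb_add.mpr (Or.inl hy)) acount_sol ha) hf
  have hmem : t₂.Memb (t₁ + rep c t₂) := memb_add.mpr (Or.inr (memb_rep.mpr ⟨hc, rfl⟩))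
  have hroot : IsParentIn (t₁ + rep c t₂) r₂ r₁ :=
    ⟨n, _, ⟨Or.inr (hmEq.refl _), hT,
        (acount_sol r₁).symm ▸ (h₁.acount_pos_iff r₁).mpr rfl⟩,
      n, t₂, ⟨Or.inl (Ingr.mem hmem), ht₂, (h₂.acount_pos_iff r₂).mpr rfl⟩,
      Or.inl ⟨t₂, hmem, hmEq.refl t₂⟩⟩
  exact (h₂.reaches_root_of_mono (fun _ _ hab ha => hab.of_ingr (Ingr.mem hmem) ht₂ ha) hf).tail
    hroot

theorem RootedTree.sol (h₁ : RootedTree t₁ r₁) (h₂ : RootedTree t₂ r₂)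
    (ht₁ : TreeLike F (n + 1) t₁) (ht₂ : TreeLike F n t₂) (hd : FDisj t₁ t₂) :
    RootedTree (t₁ + rep c t₂) r₁ where
  acount_pos_iff a := by rw [acount_sol]; exact h₁.acount_pos_iff a
  reaches_root _ := h₁.reaches_root_sol h₂ ht₁ ht₂ hd
  subsingleton_weakParentIn f := by
    have hr₂ := (h₂.acount_pos_iff r₂).mpr rfl
    by_cases hf₁ : f ∈ t₁.flat
    · refine (h₁.subsingleton_weakParentIn f).anti fun p hp => ?_
      rcases WeakParentIn.of_sol hr₂ hp with hp | hp | ⟨-, hf⟩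
      · exact hp
      · exact absurd hp.mem_flat (hd f hf₁)
      · exact absurd (mem_flat_of_acount_pos hf) (hd f hf₁)
    by_cases hfr : f = r₂
    · refine (Set.subsingleton_singleton (a := r₁)).anti fun p hp => ?_
      rcases WeakParentIn.of_sol hr₂ hp with hp | hp | ⟨hp, -⟩
      · exact absurd hp.mem_flat hf₁
      · exact absurd (hfr ▸ hp) (h₂.not_weakParentIn_root p)
      · exact (h₁.acount_pos_iff p).mp hp
    · refine (h₂.subsingleton_weakParentIn f).anti fun p hp => ?_
      rcases WeakParentIn.of_sol hr₂ hp with hp | hp | ⟨-, hf⟩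
      · exact absurd hp.mem_flat hf₁
      · exact hp
      · exact absurd ((h₂.acount_pos_iff f).mp hf) hfr
  not_weakParentIn_root p hp := by
    rcases WeakParentIn.of_sol ((h₂.acount_pos_iff r₂).mpr rfl) hp with hp | hp | ⟨-, hf⟩
    · exact h₁.not_weakParentIn_root p hp
    · exact hd r₁ h₁.root_mem_flat hp.mem_flat
    · exact hd r₁ h₁.root_mem_flat (mem_flat_of_acount_pos hf)

end Sol

section Grp

variable {n : ℕ} {r : F} {t : HMd F (n + 1)} {l : List (HMd F n × ℕ)}

theorem acount_grp (a : F) : acount a (HMd.up (n + 1) t + rep 1 (ofList l)) = acount a t := by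
  rw [acount_add, acount_rep, add_zero, acount_up]

theorem RootedTree.reaches_root_grp (h : RootedTree t r)
    (hl : ∀ q ∈ l, ∃ rq, RootedTree q.1 rq) (ht : TreeLike F (n + 1) t)
    (hall : ∀ q ∈ l, TreeLike F n q.1) (hdisj : ∀ q ∈ l, FDisj t q.1)
    (hpair : l.Pairwise fun p q => FDisj p.1 q.1) {f : F}
    (hf : f ∈ (HMd.up (n + 1) t + rep 1 (ofList l)).flat) :
    Relation.ReflTransGen
      (fun a b => IsParentIn (HMd.up (n + 1) t + rep 1 (ofList l)) a b) f r := by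
  have hT : TreeLike F (n + 2) (HMd.up (n + 1) t + rep 1 (ofList l)) := .grp l ht hall hdisj hpair
  have hGT : (ofList l).Memb (HMd.up (n + 1) t + rep 1 (ofList l)) :=
    memb_add.mpr (Or.inr (memb_rep.mpr ⟨one_pos, rfl⟩))
  rw [flat_add, Multiset.mem_add, flat_up, mem_flat_rep, mem_flat_ofList] at hf
  rcases hf with hf | ⟨-, q, hq, hq₂, hf⟩
  · refine h.reaches_root_of_mono (fun _ _ hab ha => ?_) hf
    exact (hab.up ht ha).of_memb_subset hT (fun _ hy => memb_add.mpr (Or.inl hy))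
      (fun a => (acount_grp a).trans (acount_up a _ t).symm) (by rwa [acount_up])
  obtain ⟨rq, hrq⟩ := hl q hq
  have hqG : q.1.Memb (ofList l) := memb_ofList.mpr ⟨q, hq, hq₂, rfl⟩
  have hqT : Ingr F q.1 (HMd.up (n + 1) t + rep 1 (ofList l)) := (Ingr.mem hqG).tail hGT
  have hroot : IsParentIn (HMd.up (n + 1) t + rep 1 (ofList l)) rq r :=
    ⟨n + 1, _, ⟨Or.inr (hmEq.refl _), hT,
        (acount_grp r).symm ▸ (h.acount_pos_iff r).mpr rfl⟩,
      n, q.1, ⟨Or.inl hqT, hall q hq, (hrq.acount_pos_iff rq).mpr rfl⟩,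
      Or.inr ⟨n, ofList l, ⟨_, hGT, hmEq.refl _⟩,
        fun a => Multiset.count_eq_zero.mp (acount_ofList a l), ⟨q.1, hqG, hmEq.refl _⟩⟩⟩
  exact (hrq.reaches_root_of_mono (fun _ _ hab ha => hab.of_ingr hqT (hall q hq) ha) hf).tail hroot

theorem RootedTree.subsingleton_weakParentIn_grp (h : RootedTree t r)
    (hl : ∀ q ∈ l, ∃ rq, RootedTree q.1 rq) (hdisj : ∀ q ∈ l, FDisj t q.1)
    (hpair : l.Pairwise fun p q => FDisj p.1 q.1) (f : F) :
    {p | WeakParentIn (HMd.up (n + 1) t + rep 1 (ofList l)) f p}.Subsingleton := by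
  by_cases hft : f ∈ t.flat
  · refine (h.subsingleton_weakParentIn f).anti fun p hp => ?_
    rcases WeakParentIn.of_grp hp with hp | ⟨q, hq, hp⟩ | ⟨-, q, hq, -, hf⟩
    · exact hp
    · exact absurd hp.mem_flat (hdisj q hq f hft)
    · exact absurd (mem_flat_of_acount_pos hf) (hdisj q hq f hft)
  by_cases hroot : ∃ q ∈ l, 0 < acount f q.1
  · obtain ⟨q, hq, hfq⟩ := hroot
    obtain ⟨rq, hrq⟩ := hl q hq
    refine (Set.subsingleton_singleton (a := r)).anti fun p hp => ?_
    rcases WeakParentIn.of_grp hp with hp | ⟨q', hq', hp⟩ | ⟨hp, -⟩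
    · exact absurd hp.mem_flat hft
    · rw [eq_of_mem_flat_of_pairwise hpair hq' hq hp.mem_flat (mem_flat_of_acount_pos hfq),
        (hrq.acount_pos_iff f).mp hfq] at hp
      exact absurd hp (hrq.not_weakParentIn_root p)
    · exact (h.acount_pos_iff p).mp hp
  by_cases hgrp : ∃ q ∈ l, f ∈ q.1.flat
  · obtain ⟨q, hq, hfq⟩ := hgrp
    obtain ⟨rq, hrq⟩ := hl q hq
    refine (hrq.subsingleton_weakParentIn f).anti fun p hp => ?_
    rcases WeakParentIn.of_grp hp with hp | ⟨q', hq', hp⟩ | ⟨-, q', hq', -, hf⟩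
    · exact absurd hp.mem_flat hft
    · rwa [eq_of_mem_flat_of_pairwise hpair hq' hq hp.mem_flat hfq] at hp
    · exact absurd ⟨q', hq', hf⟩ hroot
  · refine Set.subsingleton_empty.anti fun p hp => ?_
    rcases WeakParentIn.of_grp hp with hp | ⟨q, hq, hp⟩ | ⟨-, q, hq, -, hf⟩
    · exact hft hp.mem_flat
    · exact hgrp ⟨q, hq, hp.mem_flat⟩
    · exact hroot ⟨q, hq, hf⟩

theorem RootedTree.grp (h : RootedTree t r) (hl : ∀ q ∈ l, ∃ rq, RootedTree q.1 rq)
    (ht : TreeLike F (n + 1) t) (hall : ∀ q ∈ l, TreeLike F n q.1)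
    (hdisj : ∀ q ∈ l, FDisj t q.1) (hpair : l.Pairwise fun p q => FDisj p.1 q.1) :
    RootedTree (HMd.up (n + 1) t + rep 1 (ofList l)) r where
  acount_pos_iff a := by rw [acount_grp]; exact h.acount_pos_iff a
  reaches_root _ := h.reaches_root_grp hl ht hall hdisj hpair
  subsingleton_weakParentIn := h.subsingleton_weakParentIn_grp hl hdisj hpair
  not_weakParentIn_root p hp := by
    rcases WeakParentIn.of_grp hp with hp | ⟨q, hq, hp⟩ | ⟨-, q, hq, -, hf⟩
    · exact h.not_weakParentIn_root p hp
    · exact hdisj q hq r h.root_mem_flat hp.mem_flat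
    · exact hdisj q hq r h.root_mem_flat (mem_flat_of_acount_pos hf)

end Grp

theorem TreeLike.exists_rootedTree {n : ℕ} {t : HMd F n} (ht : TreeLike F n t) :
    ∃ r, RootedTree t r := by
  induction ht with
  | sing n f => exact ⟨f, rootedTree_single n f⟩
  | up ht ih =>
    obtain ⟨r, h⟩ := ih
    exact ⟨r, h.up ht⟩
  | sol c ht₁ ht₂ hd ih₁ ih₂ =>
    obtain ⟨r₁, h₁⟩ := ih₁
    obtain ⟨r₂, h₂⟩ := ih₂
    exact ⟨r₁, h₁.sol h₂ ht₁ ht₂ hd⟩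
  | grp l ht hall hdisj hpair ih ihl =>
    obtain ⟨r, h⟩ := ih
    exact ⟨r, h.grp ihl ht hall hdisj hpair⟩

/-- the structure extracted from a tree-like multiset (flattened support,
root, parent function) is a tree: the parent function is well defined on non-root nodes,
and every node reaches the root by finitely many parent steps. -/
theorem treelike_gives_tree (F : Type) (n : ℕ) (t : HMd F n) (ht : TreeLike F n t) :
    (∀ f ∈ HMd.flat t, HMd.acount f t = 0 →
      ∃! p, p ∈ HMd.flat t ∧ IsParentIn t f p) ∧
    (∀ r : F, 0 < HMd.acount r t →
      ∀ f ∈ HMd.flat t, Relation.ReflTransGen (fun a b => IsParentIn t a b) f r) := by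
  obtain ⟨r, h⟩ := ht.exists_rootedTree
  refine ⟨fun f hf hf₀ => ?_, fun r' hr' => (h.acount_pos_iff r').mp hr' ▸ h.reaches_root⟩
  rcases (h.reaches_root f hf).cases_head with hfr | ⟨p, hp, -⟩
  · have := (h.acount_pos_iff f).mpr hfr
    omega
  · exact ⟨p, ⟨hp.parent_mem_flat, hp⟩,
      fun p' ⟨_, hp'⟩ => h.subsingleton_weakParentIn f hp'.weak hp.weak⟩

end
end CFDPaper
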